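/- Let f = aₙXⁿ + a_{n−1}X^{n−1} + ⋯ + a₁X + a₀ ∈ ℍ[X] with n ≥ 1 and aₙ ≠ 0. Then every r ∈ ℍ with f(r) = 0, and every r ∈ ℍ with f′(r) = 0, satisfies all of: ‖r‖ < (1/‖aₙ‖)·√(‖aₙ‖² + ‖a_{n−1}‖² + ⋯ + ‖a₀‖²); ‖r‖ < 1 + (1/‖aₙ‖)·max_{0 ≤ k ≤ n−1} ‖aₖ‖; and ‖r‖ ≤ max{1, (‖a_{n−1}‖ + ⋯ + ‖a₀‖)/‖aₙ‖}. -/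
import Mathlib


open Polynomial

private lemma bd1 {a t : ℝ} {n : ℕ} {c : ℕ → ℝ} (ha : 0 < a) (ht : 0 ≤ t)
    (hc : ∀ k, 0 ≤ c k)
    (h : a * t ^ n ≤ ∑ k ∈ Finset.range n, c k * t ^ k) :
    t ^ 2 * a ^ 2 < a ^ 2 + ∑ k ∈ Finset.range n, c k ^ 2 := by
  have hQ0 : (0:ℝ) ≤ ∑ k ∈ Finset.range n, c k ^ 2 :=
    Finset.sum_nonneg fun k _ => sq_nonneg _
  rcases eq_or_lt_of_le hQ0 with hQz | hQpos
  · have hall : ∀ k ∈ Finset.range n, c k = 0 := by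
      intro k hk
      have h2 := (Finset.sum_eq_zero_iff_of_nonneg
        (fun k _ => sq_nonneg (c k))).mp hQz.symm k hk
      exact pow_eq_zero_iff two_ne_zero |>.mp h2
    have hsum : ∑ k ∈ Finset.range n, c k * t ^ k = 0 :=
      Finset.sum_eq_zero fun k hk => by rw [hall k hk, zero_mul]
    rw [hsum] at h
    rcases Nat.eq_zero_or_pos n with rfl | hn
    · simp at h; nlinarith
    · have htn : t ^ n = 0 := le_antisymm (by nlinarith) (pow_nonneg ht n)
      have ht0 : t = 0 := pow_eq_zero_iff hn.ne' |>.mp htn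
      rw [ht0]; nlinarith
  · rcases lt_or_ge t 1 with h1 | h1
    · have ht2 : t ^ 2 < 1 := by nlinarith
      nlinarith [mul_pos ha ha]
    · have hCS := Finset.sum_mul_sq_le_sq_mul_sq (Finset.range n) c (fun k => t ^ k)
      have hnn : 0 ≤ a * t ^ n := mul_nonneg ha.le (pow_nonneg ht n)
      have h2 : (a * t ^ n) ^ 2 ≤ (∑ k ∈ Finset.range n, c k ^ 2)
          * ∑ k ∈ Finset.range n, (t ^ k) ^ 2 :=
        le_trans (pow_le_pow_left₀ hnn h 2) hCS
      have hsq : ∀ k : ℕ, (t ^ k : ℝ) ^ 2 = (t ^ 2) ^ k := fun k => by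
        rw [← pow_mul, ← pow_mul, Nat.mul_comm]
      have hG : (∑ k ∈ Finset.range n, (t ^ k) ^ 2) * (t ^ 2 - 1)
          = (t ^ 2) ^ n - 1 := by
        simp only [hsq]; exact geom_sum_mul _ n
      have hun : 0 < (t ^ 2) ^ n := pow_pos (by nlinarith) n
      have h2' : a ^ 2 * (t ^ 2) ^ n ≤ (∑ k ∈ Finset.range n, c k ^ 2)
          * ∑ k ∈ Finset.range n, (t ^ k) ^ 2 := by
        calc a ^ 2 * (t ^ 2) ^ n = (a * t ^ n) ^ 2 := by rw [← hsq]; ring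
        _ ≤ _ := h2
      have s1 : a ^ 2 * (t ^ 2) ^ n * (t ^ 2 - 1)
          ≤ (∑ k ∈ Finset.range n, c k ^ 2) * ((t ^ 2) ^ n - 1) := by
        calc a ^ 2 * (t ^ 2) ^ n * (t ^ 2 - 1)
            ≤ ((∑ k ∈ Finset.range n, c k ^ 2)
              * ∑ k ∈ Finset.range n, (t ^ k) ^ 2) * (t ^ 2 - 1) :=
          mul_le_mul_of_nonneg_right h2' (by nlinarith)
        _ = _ := by rw [mul_assoc, hG]
      have s4 : a ^ 2 * (t ^ 2 - 1) * (t ^ 2) ^ n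
          < (∑ k ∈ Finset.range n, c k ^ 2) * (t ^ 2) ^ n := by nlinarith
      have s5 : a ^ 2 * (t ^ 2 - 1) < ∑ k ∈ Finset.range n, c k ^ 2 :=
        lt_of_mul_lt_mul_right s4 hun.le
      nlinarith

private lemma bd2 {a t M : ℝ} {n : ℕ} {c : ℕ → ℝ} (ha : 0 < a) (ht : 0 ≤ t)
    (hc : ∀ k, 0 ≤ c k) (hM : ∀ k < n, c k ≤ M)
    (h : a * t ^ n ≤ ∑ k ∈ Finset.range n, c k * t ^ k) :
    a * (t - 1) < M := by
  rcases Nat.eq_zero_or_pos n with rfl | hn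
  · simp at h; nlinarith
  have hM0 : 0 ≤ M := le_trans (hc 0) (hM 0 hn)
  rcases eq_or_lt_of_le hM0 with hMz | hMpos
  · have hsum : ∑ k ∈ Finset.range n, c k * t ^ k = 0 :=
      Finset.sum_eq_zero fun k hk => by
        have hck : c k = 0 :=
          le_antisymm (hMz ▸ hM k (Finset.mem_range.mp hk)) (hc k)
        rw [hck, zero_mul]
    rw [hsum] at h
    have htn : t ^ n = 0 := le_antisymm (by nlinarith) (pow_nonneg ht n)
    have ht0 : t = 0 := pow_eq_zero_iff hn.ne' |>.mp htn
    rw [ht0, ← hMz]; nlinarith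
  rcases le_or_gt t 1 with h1 | h1
  · nlinarith
  · have hsum_le : ∑ k ∈ Finset.range n, c k * t ^ k
        ≤ M * ∑ k ∈ Finset.range n, t ^ k := by
      rw [Finset.mul_sum]
      refine Finset.sum_le_sum fun k hk => ?_
      exact mul_le_mul_of_nonneg_right (hM k (Finset.mem_range.mp hk))
        (pow_nonneg ht k)
    have hgeo : (∑ k ∈ Finset.range n, t ^ k) * (t - 1) = t ^ n - 1 :=
      geom_sum_mul t n
    have htn : 0 < t ^ n := pow_pos (by linarith) n
    have s1 : a * t ^ n * (t - 1) ≤ M * (t ^ n - 1) := by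
      calc a * t ^ n * (t - 1)
          ≤ (M * ∑ k ∈ Finset.range n, t ^ k) * (t - 1) :=
        mul_le_mul_of_nonneg_right (le_trans h hsum_le) (by linarith)
      _ = M * (t ^ n - 1) := by rw [mul_assoc, hgeo]
    have s2 : a * (t - 1) * t ^ n < M * t ^ n := by nlinarith
    exact lt_of_mul_lt_mul_right s2 htn.le

private lemma bd3 {a t : ℝ} {n : ℕ} {c : ℕ → ℝ} (ha : 0 < a) (ht : 0 ≤ t)
    (hc : ∀ k, 0 ≤ c k)
    (h : a * t ^ n ≤ ∑ k ∈ Finset.range n, c k * t ^ k) :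
    t ≤ 1 ∨ a * t ≤ ∑ k ∈ Finset.range n, c k := by
  rcases Nat.eq_zero_or_pos n with rfl | hn
  · simp at h; nlinarith
  rcases le_or_gt t 1 with h1 | h1
  · exact Or.inl h1
  right
  have hsum_le : ∑ k ∈ Finset.range n, c k * t ^ k
      ≤ (∑ k ∈ Finset.range n, c k) * t ^ (n - 1) := by
    rw [Finset.sum_mul]
    refine Finset.sum_le_sum fun k hk => ?_
    have hk' := Finset.mem_range.mp hk
    exact mul_le_mul_of_nonneg_left (pow_le_pow_right₀ h1.le (by omega)) (hc k)
  have hp : 0 < t ^ (n - 1) := pow_pos (by linarith) _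
  have hpow : t ^ n = t ^ (n - 1) * t := by
    rw [← pow_succ]; congr 1; omega
  have hfin : a * t * t ^ (n - 1) ≤ (∑ k ∈ Finset.range n, c k) * t ^ (n - 1) := by
    calc a * t * t ^ (n - 1) = a * t ^ n := by rw [hpow]; ring
    _ ≤ _ := le_trans h hsum_le
  exact le_of_mul_le_mul_right hfin hp

private lemma quat_norm_natCast (k : ℕ) : ‖((k : ℕ) : Quaternion ℝ)‖ = k := by
  rw [show ((k : ℕ) : Quaternion ℝ) = (((k : ℕ) : ℝ) : Quaternion ℝ) by push_cast; ring,
    Quaternion.norm_coe]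
  simp

private lemma key {g : Polynomial (Quaternion ℝ)} {r : Quaternion ℝ}
    (h : Polynomial.eval r g = 0) :
    ‖g.leadingCoeff‖ * ‖r‖ ^ g.natDegree ≤
      ∑ k ∈ Finset.range g.natDegree, ‖g.coeff k‖ * ‖r‖ ^ k := by
  have he := Polynomial.eval_eq_sum_range (p := g) r
  rw [h, Finset.sum_range_succ] at he
  have h2 : g.coeff g.natDegree * r ^ g.natDegree
      = -∑ k ∈ Finset.range g.natDegree, g.coeff k * r ^ k :=
    eq_neg_of_add_eq_zero_right he.symm
  calc ‖g.leadingCoeff‖ * ‖r‖ ^ g.natDegree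
      = ‖g.coeff g.natDegree * r ^ g.natDegree‖ := by
        rw [norm_mul, norm_pow, Polynomial.coeff_natDegree]
    _ = ‖∑ k ∈ Finset.range g.natDegree, g.coeff k * r ^ k‖ := by
        rw [h2, norm_neg]
    _ ≤ ∑ k ∈ Finset.range g.natDegree, ‖g.coeff k * r ^ k‖ :=
        norm_sum_le _ _
    _ = ∑ k ∈ Finset.range g.natDegree, ‖g.coeff k‖ * ‖r‖ ^ k :=
        Finset.sum_congr rfl fun k _ => by rw [norm_mul, norm_pow]

private lemma gcoeff (f : Polynomial (Quaternion ℝ)) (k : ℕ) :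
    ‖(derivative f).coeff k‖ = ((k : ℝ) + 1) * ‖f.coeff (k + 1)‖ := by
  rw [Polynomial.coeff_derivative, norm_mul]
  rw [show ((k : Quaternion ℝ) + 1) = (((k + 1 : ℕ) : Quaternion ℝ)) by push_cast; ring]
  rw [quat_norm_natCast]
  push_cast
  ring

/- Corollary 4.15 (stated for ℍ): Cauchy-type bounds on the roots and the
critical points of an arbitrary polynomial `f = aₙXⁿ + ⋯ + a₁X + a₀` with
`n ≥ 1` and `aₙ ≠ 0`. -/
set_option maxHeartbeats 2000000 in
theorem roots_and_critical_points_bounds_nonmonic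
    (f : Polynomial (Quaternion ℝ)) (hn : 1 ≤ f.natDegree) (hf : f ≠ 0)
    (r : Quaternion ℝ)
    (hr : Polynomial.eval r f = 0 ∨ Polynomial.eval r (derivative f) = 0) :
    ‖r‖ < (1 / ‖f.leadingCoeff‖) *
        Real.sqrt (∑ k ∈ Finset.range (f.natDegree + 1), ‖f.coeff k‖ ^ 2) ∧
    ‖r‖ < 1 + (1 / ‖f.leadingCoeff‖) *
        (Finset.range f.natDegree).sup'
          (Finset.nonempty_range_iff.mpr (by omega)) (fun k => ‖f.coeff k‖) ∧
    ‖r‖ ≤ max 1 ((∑ k ∈ Finset.range f.natDegree, ‖f.coeff k‖) / ‖f.leadingCoeff‖) := by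
  have hne : (Finset.range f.natDegree).Nonempty :=
    Finset.nonempty_range_iff.mpr (by omega)
  set n := f.natDegree with hndef
  set a := ‖f.leadingCoeff‖ with hadef
  set t := ‖r‖ with htdef
  set M := (Finset.range n).sup' hne (fun k => ‖f.coeff k‖) with hMdef
  set S := ∑ k ∈ Finset.range n, ‖f.coeff k‖ with hSdef
  set T := ∑ k ∈ Finset.range (n + 1), ‖f.coeff k‖ ^ 2 with hTdef
  have ha : 0 < a := norm_pos_iff.mpr (Polynomial.leadingCoeff_ne_zero.mpr hf)
  have ht : 0 ≤ t := norm_nonneg r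
  have hMmem : ∀ k < n, ‖f.coeff k‖ ≤ M := fun k hk =>
    Finset.le_sup' (fun k => ‖f.coeff k‖) (Finset.mem_range.mpr hk)
  -- the three core real inequalities
  have G : t ^ 2 * a ^ 2 < T ∧ a * (t - 1) < M ∧ (t ≤ 1 ∨ a * t ≤ S) := by
    rcases hr with hr | hr
    · -- root of f
      have hkey := key hr
      rw [← hndef, ← hadef, ← htdef] at hkey
      refine ⟨?_, ?_, ?_⟩
      · have := bd1 ha ht (fun k => norm_nonneg _) hkey
        rw [hTdef, Finset.sum_range_succ, Polynomial.coeff_natDegree, ← hadef]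
        linarith
      · exact bd2 ha ht (fun k => norm_nonneg _) hMmem hkey
      · exact bd3 ha ht (fun k => norm_nonneg _) hkey
    · -- root of f'
      set g := derivative f with hgdef
      have hn1 : n - 1 + 1 = n := by omega
      have hfn : f.coeff n ≠ 0 := by
        rw [hndef, Polynomial.coeff_natDegree]
        exact Polynomial.leadingCoeff_ne_zero.mpr hf
      have hnK : ((n : ℕ) : Quaternion ℝ) ≠ 0 := by
        intro hz
        have h0 := quat_norm_natCast n
        rw [hz, norm_zero] at h0
        have : (1:ℝ) ≤ (n:ℝ) := by exact_mod_cast hn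
        linarith
      have hgc : g.coeff (n - 1) ≠ 0 := by
        rw [hgdef, Polynomial.coeff_derivative]
        rw [show ((n - 1 : ℕ) : Quaternion ℝ) + 1 = ((n : ℕ) : Quaternion ℝ) by
          rw [show ((n : ℕ) : Quaternion ℝ) = (((n - 1) + 1 : ℕ) : Quaternion ℝ) by
            rw [hn1]]
          push_cast; ring]
        rw [hn1]
        exact mul_ne_zero hfn hnK
      have hg0 : g ≠ 0 := fun hgz => hgc (by simp [hgz])
      have hm : g.natDegree = n - 1 :=
        le_antisymm (Polynomial.natDegree_derivative_le f)
          (Polynomial.le_natDegree_of_ne_zero hgc)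
      have hncast : ((n - 1 : ℕ) : ℝ) + 1 = (n : ℝ) := by
        rw [show ((n : ℕ) : ℝ) = (((n - 1) + 1 : ℕ) : ℝ) by rw [hn1]]
        push_cast; ring
      have halc : ‖g.leadingCoeff‖ = (n : ℝ) * a := by
        rw [Polynomial.leadingCoeff, hm, gcoeff, hn1, hncast, hadef, hndef,
          Polynomial.coeff_natDegree]
      have hnR : (0:ℝ) < (n : ℝ) := by
        have : (1:ℝ) ≤ (n:ℝ) := by exact_mod_cast hn
        linarith
      have ha' : 0 < (n : ℝ) * a := mul_pos hnR ha
      have hkey := key hr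
      rw [hm, halc, ← htdef] at hkey
      have hcnn : ∀ k, (0:ℝ) ≤ ‖g.coeff k‖ := fun k => norm_nonneg _
      refine ⟨?_, ?_, ?_⟩
      · -- sqrt bound
        have hB1 := bd1 ha' ht hcnn hkey
        have e1 : ((n:ℝ) * a) ^ 2 + ∑ k ∈ Finset.range (n - 1), ‖g.coeff k‖ ^ 2
            = ∑ k ∈ Finset.range n, ‖g.coeff k‖ ^ 2 := by
          rw [show Finset.range n = Finset.range ((n - 1) + 1) by rw [hn1],
            Finset.sum_range_succ]
          rw [show ‖g.coeff (n - 1)‖ = (n:ℝ) * a by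
            rw [← hm, Polynomial.coeff_natDegree]; exact halc]
          ring
        have e2 : ∑ k ∈ Finset.range n, ‖g.coeff k‖ ^ 2
            ≤ (n:ℝ) ^ 2 * T := by
          have step1 : ∑ k ∈ Finset.range n, ‖g.coeff k‖ ^ 2
              ≤ ∑ k ∈ Finset.range n, (n:ℝ) ^ 2 * ‖f.coeff (k + 1)‖ ^ 2 := by
            refine Finset.sum_le_sum fun k hk => ?_
            have hk' := Finset.mem_range.mp hk
            rw [gcoeff, mul_pow]
            have hkn : ((k:ℝ) + 1) ≤ (n:ℝ) := by exact_mod_cast hk'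
            have h0 : (0:ℝ) ≤ (k:ℝ) + 1 := by positivity
            exact mul_le_mul_of_nonneg_right (by nlinarith) (sq_nonneg _)
          have step2 : ∑ k ∈ Finset.range n, ‖f.coeff (k + 1)‖ ^ 2 ≤ T := by
            rw [hTdef, Finset.sum_range_succ']
            have : (0:ℝ) ≤ ‖f.coeff 0‖ ^ 2 := sq_nonneg _
            linarith
          calc ∑ k ∈ Finset.range n, ‖g.coeff k‖ ^ 2
              ≤ ∑ k ∈ Finset.range n, (n:ℝ) ^ 2 * ‖f.coeff (k + 1)‖ ^ 2 := step1
            _ = (n:ℝ) ^ 2 * ∑ k ∈ Finset.range n, ‖f.coeff (k + 1)‖ ^ 2 := by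
                rw [Finset.mul_sum]
            _ ≤ (n:ℝ) ^ 2 * T := mul_le_mul_of_nonneg_left step2 (sq_nonneg _)
        have hfin : t ^ 2 * a ^ 2 * (n:ℝ) ^ 2 < T * (n:ℝ) ^ 2 := by
          calc t ^ 2 * a ^ 2 * (n:ℝ) ^ 2 = t ^ 2 * ((n:ℝ) * a) ^ 2 := by ring
            _ < ((n:ℝ) * a) ^ 2 + ∑ k ∈ Finset.range (n - 1), ‖g.coeff k‖ ^ 2 := hB1
            _ = ∑ k ∈ Finset.range n, ‖g.coeff k‖ ^ 2 := e1
            _ ≤ (n:ℝ) ^ 2 * T := e2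
            _ = T * (n:ℝ) ^ 2 := by ring
        exact lt_of_mul_lt_mul_right hfin (sq_nonneg _)
      · -- max-coefficient bound
        have hM' : ∀ k < n - 1, ‖g.coeff k‖ ≤ (n:ℝ) * M := by
          intro k hk
          rw [gcoeff]
          have hmem : k + 1 < n := by omega
          have h1 : ‖f.coeff (k + 1)‖ ≤ M := hMmem (k + 1) hmem
          have hkn : ((k:ℝ) + 1) ≤ (n:ℝ) := by exact_mod_cast Nat.le_of_lt hmem
          have hM0 : 0 ≤ M := le_trans (norm_nonneg _) h1
          nlinarith [norm_nonneg (f.coeff (k + 1))]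
        have hB2 := bd2 ha' ht hcnn hM' hkey
        have : (n:ℝ) * (a * (t - 1)) < (n:ℝ) * M := by nlinarith
        exact lt_of_mul_lt_mul_left this hnR.le
      · -- sum bound
        rcases bd3 ha' ht hcnn hkey with h1 | h2
        · exact Or.inl h1
        · right
          have e3 : ∑ k ∈ Finset.range (n - 1), ‖g.coeff k‖ ≤ (n:ℝ) * S := by
            have step1 : ∑ k ∈ Finset.range (n - 1), ‖g.coeff k‖
                ≤ ∑ k ∈ Finset.range (n - 1), (n:ℝ) * ‖f.coeff (k + 1)‖ := by
              refine Finset.sum_le_sum fun k hk => ?_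
              have hk' := Finset.mem_range.mp hk
              rw [gcoeff]
              have hkn : ((k:ℝ) + 1) ≤ (n:ℝ) := by
                exact_mod_cast (by omega : k + 1 ≤ n)
              nlinarith [norm_nonneg (f.coeff (k + 1))]
            have step2 : ∑ k ∈ Finset.range (n - 1), ‖f.coeff (k + 1)‖ ≤ S := by
              rw [hSdef, show Finset.range n = Finset.range ((n - 1) + 1) by rw [hn1],
                Finset.sum_range_succ']
              have : (0:ℝ) ≤ ‖f.coeff 0‖ := norm_nonneg _
              linarith
            calc ∑ k ∈ Finset.range (n - 1), ‖g.coeff k‖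
                ≤ ∑ k ∈ Finset.range (n - 1), (n:ℝ) * ‖f.coeff (k + 1)‖ := step1
              _ = (n:ℝ) * ∑ k ∈ Finset.range (n - 1), ‖f.coeff (k + 1)‖ := by
                  rw [Finset.mul_sum]
              _ ≤ (n:ℝ) * S := mul_le_mul_of_nonneg_left step2 hnR.le
          have : (n:ℝ) * (a * t) ≤ (n:ℝ) * S := by nlinarith
          exact le_of_mul_le_mul_left this hnR
  obtain ⟨G1, G2, G3⟩ := G
  have hT0 : 0 ≤ T := Finset.sum_nonneg fun k _ => sq_nonneg _
  refine ⟨?_, ?_, ?_⟩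
  · have h1 : t * a < Real.sqrt T :=
      (Real.lt_sqrt (mul_nonneg ht ha.le)).mpr (by nlinarith)
    calc t < Real.sqrt T / a := (lt_div_iff₀ ha).mpr h1
      _ = (1 / a) * Real.sqrt T := by ring
  · have h1 : t - 1 < M / a := (lt_div_iff₀ ha).mpr (by nlinarith)
    have e : (1:ℝ) / a * M = M / a := by ring
    rw [e]
    linarith
  · rcases G3 with h1 | h2
    · exact le_max_of_le_left h1
    · exact le_max_of_le_right ((le_div_iff₀ ha).mpr (by nlinarith))
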